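/- Tensor product equivalence: the tensor product pseudospectral approximation equals the tensor product Lagrange interpolant: ∑_{𝐢∈ℐ_𝐧} f̂_𝐢 π_𝐢(s) = ∑_{𝐢∈ℐ_𝐧} f(λ_𝐢) ℓ_𝐢(s) for all s ∈ 𝒮, where ℓ_𝐢(s) = ℓ_{i₁}(s₁)⋯ℓ_{i_d}(s_d). -/

import Mathlib

/-!
Write `π_i = p (i + 1)` and `K(x, y) = ∑_{i < n} π_i(x) π_i(y)`. For a root `x` of `π_n` and
`i < n`, the expansion of `x π_i(x)` in `π_0, …, π_n` loses its `π_n` term, and its coefficients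
`∫ t π_i π_k w` are symmetric in `i, k`; hence `x K(x, y) = y K(x, y)` for two roots `x, y`
(Christoffel–Darboux), so `K(λ_j, λ_m) = 0` for `j ≠ m`. Therefore `s ↦ K(λ_j, s) / K(λ_j, λ_j)`,
a polynomial of degree `< n` equal to `δ_jm` at the nodes, is the Lagrange cardinal polynomial
`ℓ_j`, and `ν_j = 1 / K(λ_j, λ_j)`. Expanding `f̂_𝐢` and exchanging the sums, the pseudospectral
approximation factors coordinatewise into these normalised kernels.
-/

open MeasureTheory Polynomial Finset

structure IsOrthonormalSeq (S : Set ℝ) (w : ℝ → ℝ) (P : ℕ → ℝ[X]) : Prop where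
  degree_eq : ∀ i, (P i).degree = i
  integrableOn : ∀ q : ℝ[X], IntegrableOn (fun s => q.eval s * w s) S
  integral_mul : ∀ i j, ∫ s in S, (P i).eval s * (P j).eval s * w s = if i = j then 1 else 0

lemma Lagrange.eval_basis {F ι : Type*} [Field F] [DecidableEq ι] (s : Finset ι) (v : ι → F)
    (i : ι) (x : F) :
    (Lagrange.basis s v i).eval x = ∏ j ∈ s.erase i, (x - v j) / (v i - v j) := by
  simp only [Lagrange.basis, Lagrange.basisDivisor, eval_prod, eval_mul, eval_C, eval_sub, eval_X,
    div_eq_inv_mul]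

lemma Finset.sum_pi_sum_mul_prod {ι R : Type*} [Fintype ι] [DecidableEq ι] [CommSemiring R]
    {κ : ι → Type*} [∀ k, Fintype (κ k)] (F : (∀ k, κ k) → R) (a : ∀ k, κ k → κ k → R) :
    ∑ i : ∀ k, κ k, ∑ j : ∀ k, κ k, F j * ∏ k, a k (i k) (j k)
      = ∑ j : ∀ k, κ k, F j * ∏ k, ∑ i, a k i (j k) := by
  rw [sum_comm]
  refine sum_congr rfl fun j _ => ?_
  rw [← mul_sum, Fintype.prod_sum]

namespace IsOrthonormalSeq

variable {S : Set ℝ} {w : ℝ → ℝ} {P : ℕ → ℝ[X]}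

lemma of_succ {p : ℕ → ℝ[X]} (hdeg : ∀ i, 1 ≤ i → (p i).natDegree = i - 1)
    (hint : ∀ q : ℝ[X], IntegrableOn (fun s => q.eval s * w s) S)
    (horth : ∀ i j, 1 ≤ i → 1 ≤ j →
      ∫ s in S, (p i).eval s * (p j).eval s * w s = if i = j then 1 else 0) :
    IsOrthonormalSeq S w fun i => p (i + 1) := by
  have hne : ∀ i, p (i + 1) ≠ 0 := fun i h0 => by
    simpa [h0] using horth (i + 1) (i + 1) (by omega) (by omega)
  refine ⟨fun i => ?_, hint, fun i j => by simpa using horth (i + 1) (j + 1) (by omega) (by omega)⟩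
  rw [degree_eq_natDegree (hne i), hdeg (i + 1) (by omega), Nat.add_sub_cancel]

lemma exists_eq_sum_smul (hP : IsOrthonormalSeq S w P) {N : ℕ} {q : ℝ[X]}
    (hq : q.degree < N) : ∃ c : Fin N → ℝ, ∑ i, c i • P i = q := by
  let P' : Polynomial.Sequence ℝ := ⟨P, hP.degree_eq⟩
  have hspan : Submodule.span ℝ (P '' Set.Iio N) = degreeLT ℝ N :=
    P'.span_degreeLT fun i _ => (leadingCoeff_ne_zero.mpr (P'.ne_zero i)).isUnit
  rw [← mem_degreeLT, ← hspan, ← Fin.range_val, ← Set.range_comp] at hq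
  exact (Submodule.mem_span_range_iff_exists_fun ℝ).mp hq

lemma integral_sum_smul_mul (hP : IsOrthonormalSeq S w P) {N : ℕ} (c : Fin N → ℝ) (m : Fin N) :
    ∫ s in S, (∑ i, c i • P i).eval s * (P m).eval s * w s = c m := by
  have hterm : ∀ i : Fin N,
      ∫ s in S, c i * ((P i).eval s * (P m).eval s * w s) = if i = m then c m else 0 := by
    intro i
    rw [integral_const_mul, hP.integral_mul]
    by_cases h : i = m <;> simp [h, Fin.val_inj]
  have hexpand : ∀ s, (∑ i, c i • P i).eval s * (P m).eval s * w s
      = ∑ i : Fin N, c i * ((P i).eval s * (P m).eval s * w s) := fun s => by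
    simp only [eval_finsetSum, eval_smul, smul_eq_mul, sum_mul]
    exact sum_congr rfl fun i _ => by ring
  simp_rw [hexpand]
  rw [integral_finsetSum _ fun i _ => ?_]
  · simp [hterm]
  · simpa [mul_assoc] using (hP.integrableOn (P i * P m)).const_mul (c i)

lemma eval_eq_sum_integral (hP : IsOrthonormalSeq S w P) {N : ℕ} {q : ℝ[X]}
    (hq : q.degree < N) (x : ℝ) :
    q.eval x = ∑ i : Fin N, (∫ s in S, q.eval s * (P i).eval s * w s) * (P i).eval x := by
  obtain ⟨c, rfl⟩ := hP.exists_eq_sum_smul hq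
  simp_rw [hP.integral_sum_smul_mul]
  simp only [eval_finsetSum, eval_smul, smul_eq_mul]

lemma mul_eval_eq_sum_of_eval_eq_zero (hP : IsOrthonormalSeq S w P) {n : ℕ} {x : ℝ}
    (hx : (P n).eval x = 0) (i : Fin n) :
    x * (P i).eval x
      = ∑ k : Fin n, (∫ s in S, s * (P i).eval s * (P k).eval s * w s) * (P k).eval x := by
  have hdeg : (X * P i).degree < ↑(n + 1) := by
    rw [degree_mul, degree_X, hP.degree_eq, add_comm]
    exact_mod_cast Nat.add_lt_add_right i.isLt 1
  simpa only [eval_mul, eval_X, Fin.sum_univ_castSucc, Fin.val_castSucc, Fin.val_last, hx,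
    mul_zero, add_zero] using hP.eval_eq_sum_integral hdeg x

lemma sum_eval_mul_eval_eq_zero (hP : IsOrthonormalSeq S w P) {n : ℕ} {x y : ℝ}
    (hx : (P n).eval x = 0) (hy : (P n).eval y = 0) (hxy : x ≠ y) :
    ∑ i : Fin n, (P i).eval x * (P i).eval y = 0 := by
  set c : Fin n → Fin n → ℝ := fun i k => ∫ s in S, s * (P i).eval s * (P k).eval s * w s
  have hc : ∀ i k, c i k = c k i := fun i k => integral_congr_ae <| .of_forall fun s => by ring
  set A := ∑ i, ∑ k, c i k * ((P i).eval x * (P k).eval y)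
  have hxA : x * ∑ i : Fin n, (P i).eval x * (P i).eval y = A := by
    simp only [mul_sum, ← mul_assoc, hP.mul_eval_eq_sum_of_eval_eq_zero hx, sum_mul]
    rw [sum_comm]
    exact sum_congr rfl fun i _ => sum_congr rfl fun k _ => by rw [hc]; ring
  have hyA : y * ∑ i : Fin n, (P i).eval x * (P i).eval y = A := by
    simp only [mul_sum, mul_left_comm y, hP.mul_eval_eq_sum_of_eval_eq_zero hy]
    exact sum_congr rfl fun i _ => sum_congr rfl fun k _ => by ring
  exact (mul_eq_zero.mp (by rw [sub_mul, hxA, hyA, sub_self] : (x - y) * _ = 0)).resolve_left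
    (sub_ne_zero.mpr hxy)

lemma eval_zero_ne_zero (hP : IsOrthonormalSeq S w P) (x : ℝ) : (P 0).eval x ≠ 0 := by
  have h0 : (P 0).degree = 0 := by simpa using hP.degree_eq 0
  rw [eq_C_of_degree_eq_zero h0, eval_C]
  exact coeff_ne_zero_of_eq_degree h0

lemma sum_eval_mul_eval_div_eq_eval_basis (hP : IsOrthonormalSeq S w P) {n : ℕ}
    {lam : Fin n → ℝ} (hroot : ∀ j, (P n).eval (lam j) = 0) (hinj : Function.Injective lam)
    (j : Fin n) (x : ℝ) :
    (∑ i : Fin n, (P i).eval (lam j) * (P i).eval x) / ∑ i : Fin n, (P i).eval (lam j) ^ 2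
      = (Lagrange.basis univ lam j).eval x := by
  set Q : ℝ[X] := ∑ i : Fin n, (P i).eval (lam j) • P i
  have hQ : ∀ y, Q.eval y = ∑ i : Fin n, (P i).eval (lam j) * (P i).eval y := fun y => by
    simp only [Q, eval_finsetSum, eval_smul, smul_eq_mul]
  have hQdeg : Q.degree < #(univ : Finset (Fin n)) := by
    rw [card_univ, Fintype.card_fin, ← mem_degreeLT]
    refine Submodule.sum_mem _ fun i _ => Submodule.smul_mem _ _ (mem_degreeLT.mpr ?_)
    rw [hP.degree_eq]
    exact_mod_cast i.isLt
  have hQj : Q.eval (lam j) ≠ 0 := by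
    rw [hQ]
    refine (sum_pos' (fun i _ => mul_self_nonneg _) ?_).ne'
    exact ⟨⟨0, j.pos⟩, mem_univ _, mul_self_pos.mpr (hP.eval_zero_ne_zero _)⟩
  have hbasis : Q = C (Q.eval (lam j)) * Lagrange.basis univ lam j := by
    refine eq_of_degrees_lt_of_eval_index_eq univ hinj.injOn hQdeg ?_ fun m _ => ?_
    · rw [degree_C_mul hQj, Lagrange.degree_basis hinj.injOn (mem_univ j), card_univ,
        Fintype.card_fin]
      exact_mod_cast Nat.sub_lt j.pos one_pos
    · rw [eval_mul, eval_C]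
      obtain rfl | hjm := eq_or_ne j m
      · rw [Lagrange.eval_basis_self hinj.injOn (mem_univ j), mul_one]
      · rw [Lagrange.eval_basis_of_ne hjm (mem_univ m), mul_zero, hQ,
          hP.sum_eval_mul_eval_eq_zero (hroot j) (hroot m) (hinj.ne hjm)]
  calc (∑ i : Fin n, (P i).eval (lam j) * (P i).eval x) / ∑ i : Fin n, (P i).eval (lam j) ^ 2
      = Q.eval x / Q.eval (lam j) := by simp only [hQ, sq]
    _ = (Lagrange.basis univ lam j).eval x := by
      nth_rewrite 1 [hbasis]
      rw [eval_mul, eval_C, mul_div_cancel_left₀ _ hQj]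

end IsOrthonormalSeq

theorem stmt_12_general (d : ℕ) (n : Fin d → ℕ)
    (S : Fin d → Set ℝ) (w : Fin d → ℝ → ℝ) (p : Fin d → ℕ → Polynomial ℝ)
    (lam : ∀ k, Fin (n k) → ℝ) (ν : ∀ k, Fin (n k) → ℝ)
    (hdeg : ∀ k i, 1 ≤ i → (p k i).natDegree = i - 1)
    (hint : ∀ k (q : Polynomial ℝ), IntegrableOn (fun s => q.eval s * w k s) (S k))
    (horth : ∀ k i j, 1 ≤ i → 1 ≤ j →
      ∫ s in S k, (p k i).eval s * (p k j).eval s * w k s = if i = j then 1 else 0)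
    (hroot : ∀ k (j : Fin (n k)), (p k (n k + 1)).eval (lam k j) = 0)
    (hinj : ∀ k, Function.Injective (lam k))
    (hν : ∀ k j, ν k j = 1 / ∑ i : Fin (n k), ((p k ((i : ℕ) + 1)).eval (lam k j)) ^ 2)
    (f : (Fin d → ℝ) → ℝ) (fhat : (∀ k, Fin (n k)) → ℝ)
    (hfhat : ∀ i : ∀ k, Fin (n k),
      fhat i = ∑ j : ∀ k, Fin (n k), f (fun k => lam k (j k)) *
        (∏ k, (p k ((i k : ℕ) + 1)).eval (lam k (j k))) * ∏ k, ν k (j k)) :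
    ∀ s : Fin d → ℝ,
      ∑ i : ∀ k, Fin (n k), fhat i * ∏ k, (p k ((i k : ℕ) + 1)).eval (s k)
        = ∑ i : ∀ k, Fin (n k), f (fun k => lam k (i k)) *
            ∏ k, ∏ j ∈ Finset.univ.erase (i k),
              (s k - lam k j) / (lam k (i k) - lam k j) := by
  intro s
  have hP k := IsOrthonormalSeq.of_succ (hdeg k) (hint k) (horth k)
  calc ∑ i : ∀ k, Fin (n k), fhat i * ∏ k, (p k ((i k : ℕ) + 1)).eval (s k)
      = ∑ i : ∀ k, Fin (n k), ∑ j : ∀ k, Fin (n k), f (fun k => lam k (j k)) *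
          ∏ k, ((p k ((i k : ℕ) + 1)).eval (lam k (j k)) * (p k ((i k : ℕ) + 1)).eval (s k)
            * ν k (j k)) := by
        refine sum_congr rfl fun i _ => ?_
        rw [hfhat, sum_mul]
        refine sum_congr rfl fun j _ => ?_
        rw [prod_mul_distrib, prod_mul_distrib]
        ring
    _ = ∑ j : ∀ k, Fin (n k), f (fun k => lam k (j k)) *
          ∏ k, ∑ i : Fin (n k), (p k ((i : ℕ) + 1)).eval (lam k (j k))
            * (p k ((i : ℕ) + 1)).eval (s k) * ν k (j k) :=
        sum_pi_sum_mul_prod (fun j => f fun k => lam k (j k)) fun k i j =>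
          (p k ((i : ℕ) + 1)).eval (lam k j) * (p k ((i : ℕ) + 1)).eval (s k) * ν k j
    _ = _ := by
        simp_rw [← sum_mul, hν, ← div_eq_mul_one_div,
          (hP _).sum_eval_mul_eval_div_eq_eval_basis (hroot _) (hinj _), Lagrange.eval_basis]

/-- Tensor product equivalence: the tensor product pseudospectral approximation equals the
tensor product Lagrange interpolant on the tensor grid of Gaussian nodes. -/
theorem stmt_12 (d : ℕ) (n : Fin d → ℕ) (hn : ∀ k, 0 < n k)
    (S : Fin d → Set ℝ) (w : Fin d → ℝ → ℝ) (p : Fin d → ℕ → Polynomial ℝ)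
    (lam : ∀ k, Fin (n k) → ℝ) (ν : ∀ k, Fin (n k) → ℝ)
    (hS : ∀ k, MeasurableSet (S k))
    (hw : ∀ k, ∀ s ∈ S k, 0 < w k s)
    (hdeg : ∀ k i, 1 ≤ i → (p k i).natDegree = i - 1)
    (hint : ∀ k (q : Polynomial ℝ), IntegrableOn (fun s => q.eval s * w k s) (S k))
    (horth : ∀ k i j, 1 ≤ i → 1 ≤ j →
      ∫ s in S k, (p k i).eval s * (p k j).eval s * w k s = if i = j then 1 else 0)
    (hroot : ∀ k (j : Fin (n k)), (p k (n k + 1)).eval (lam k j) = 0)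
    (hinj : ∀ k, Function.Injective (lam k))
    (hν : ∀ k j, ν k j = 1 / ∑ i : Fin (n k), ((p k ((i : ℕ) + 1)).eval (lam k j)) ^ 2)
    (f : (Fin d → ℝ) → ℝ) (fhat : (∀ k, Fin (n k)) → ℝ)
    (hfhat : ∀ i : ∀ k, Fin (n k),
      fhat i = ∑ j : ∀ k, Fin (n k), f (fun k => lam k (j k)) *
        (∏ k, (p k ((i k : ℕ) + 1)).eval (lam k (j k))) * ∏ k, ν k (j k)) :
    ∀ s : Fin d → ℝ,
      ∑ i : ∀ k, Fin (n k), fhat i * ∏ k, (p k ((i k : ℕ) + 1)).eval (s k)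
        = ∑ i : ∀ k, Fin (n k), f (fun k => lam k (i k)) *
            ∏ k, ∏ j ∈ Finset.univ.erase (i k),
              (s k - lam k j) / (lam k (i k) - lam k j) :=
  stmt_12_general d n S w p lam ν hdeg hint horth hroot hinj hν f fhat hfhat
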